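/- Let D be the distance matrix of the complete m-partite graph K_{n₁,...,n_m} on N = Σ nᵢ vertices. Then det D = (-2)^{N-m} · [ Σ_{i=1}^m ( nᵢ · Π_{j≠i} (nⱼ - 2) ) + Π_{i=1}^m (nᵢ - 2) ]. -/

import Mathlib

/-!
Let `P` be the `N × m` indicator matrix of the parts and `Q = Pᵀ + J`, so that `P Q` has entry
`2` within a part and `1` across parts, and `D = P Q - 2`. Sylvester's identity
`det (1 - ½ P Q) = det (1 - ½ Q P)` turns `det D` into an `m × m` determinant, and
`Q P = diag n + 1 nᵀ` is diagonal plus rank one. The matrix determinant lemma in its adjugate form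
`det (A + u vᵀ) = det A + vᵀ (adj A) u` holds without invertibility, which matters here since
`diag (n - 2)` is singular as soon as some part has size 2.
-/

open Finset Matrix

namespace Matrix

variable {n R : Type*} [Fintype n] [DecidableEq n] [CommRing R]

theorem det_add_vecMulVec_eq_det_add_sum (A : Matrix n n R) (u v : n → R) :
    (A + vecMulVec u v).det = A.det + ∑ i, u i * (A.updateRow i v).det := by
  suffices key : ∀ s : Finset n, (A + vecMulVec (fun i => if i ∈ s then u i else 0) v).det
      = A.det + ∑ i ∈ s, u i * (A.updateRow i v).det by
    simpa using key univ
  intro s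
  induction s using Finset.induction_on with
  | empty =>
    simp only [notMem_empty, if_false, sum_empty, add_zero, ← Pi.zero_def, zero_vecMulVec]
  | insert k s hk ih =>
    set B := A + vecMulVec (fun i => if i ∈ s then u i else 0) v
    have hBk : B k = A k := by ext j; simp [B, vecMulVec, hk]
    have hB : A + vecMulVec (fun i => if i ∈ insert k s then u i else 0) v
        = B.updateRow k (A k + u k • v) := by
      ext i j
      by_cases hik : i = k
      · subst hik; simp [vecMulVec]
      · simp [B, vecMulVec, hik]
    -- the rows of `B` other than row `k` differ from those of `A` by multiples of `v`
    have hBv : (B.updateRow k v).det = (A.updateRow k v).det := by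
      refine det_eq_of_forall_row_eq_smul_add_const (fun i => if i ∈ s then u i else 0) k
        (by simp [hk]) fun i j => ?_
      by_cases hik : i = k
      · subst hik; simp [hk]
      · simp [B, vecMulVec, hik]
    rw [hB, det_updateRow_add, det_updateRow_smul, ← hBk, updateRow_eq_self, ih, hBv,
      sum_insert hk]
    ring

theorem det_add_vecMulVec (A : Matrix n n R) (u v : n → R) :
    (A + vecMulVec u v).det = A.det + v ⬝ᵥ (adjugate A *ᵥ u) := by
  have hrow (i : n) : (A.updateRow i v).det = (v ᵥ* adjugate A) i := by
    rw [← cramer_transpose_apply, cramer_eq_adjugate_mulVec, ← adjugate_transpose,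
      mulVec_transpose]
  rw [det_add_vecMulVec_eq_det_add_sum, dotProduct_mulVec, dotProduct_comm]
  simp only [hrow, dotProduct]

theorem det_diagonal_add_vecMulVec (d u v : n → R) :
    (diagonal d + vecMulVec u v).det = ∏ i, d i + ∑ i, u i * v i * ∏ j ∈ univ.erase i, d j := by
  rw [det_add_vecMulVec, det_diagonal, adjugate_diagonal]
  simp only [dotProduct, mulVec_diagonal]
  congr 1
  exact sum_congr rfl fun i _ => by ring

end Matrix

section CompleteMultipartite

variable {m : ℕ} (n : Fin m → ℕ)

def partIndicator : Matrix ((i : Fin m) × Fin (n i)) (Fin m) ℝ :=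
  of fun v i => if v.1 = i then 1 else 0

theorem partIndicator_mul_map_add_one_apply (u v : (i : Fin m) × Fin (n i)) :
    (partIndicator n * (partIndicator n)ᵀ.map (· + 1)) u v
      = (if u.1 = v.1 then 1 else 0) + 1 := by
  simp [partIndicator, mul_apply, add_comm, eq_comm]

theorem map_add_one_mul_partIndicator :
    (partIndicator n)ᵀ.map (· + 1) * partIndicator n
      = diagonal (fun i => (n i : ℝ)) + vecMulVec 1 (fun i => (n i : ℝ)) := by
  ext i j
  rcases eq_or_ne i j with rfl | hij
  · simp [partIndicator, mul_apply, Fintype.sum_sigma, vecMulVec]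
  · simp [partIndicator, mul_apply, Fintype.sum_sigma, vecMulVec, hij, hij.symm]

theorem one_sub_map_add_one_mul_partIndicator :
    1 - (partIndicator n)ᵀ.map (· + 1) * ((2⁻¹ : ℝ) • partIndicator n)
      = (-2⁻¹ : ℝ) • (diagonal (fun i => (n i : ℝ) - 2) + vecMulVec 1 (fun i => (n i : ℝ))) := by
  rw [Matrix.mul_smul, map_add_one_mul_partIndicator]
  ext i j
  rcases eq_or_ne i j with rfl | hij
  · simp [vecMulVec]; ring
  · simp [vecMulVec, hij]

theorem eq_smul_one_sub_partIndicator_mul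
    (D : Matrix ((i : Fin m) × Fin (n i)) ((i : Fin m) × Fin (n i)) ℝ)
    (hD : ∀ u v, D u v = if u = v then 0 else if u.1 = v.1 then 2 else 1) :
    D = (-2 : ℝ) • (1 - ((2⁻¹ : ℝ) • partIndicator n) * (partIndicator n)ᵀ.map (· + 1)) := by
  ext u v
  rw [hD, Matrix.smul_apply, Matrix.sub_apply, Matrix.smul_mul, Matrix.smul_apply,
    partIndicator_mul_map_add_one_apply, one_apply]
  split_ifs <;> simp_all <;> norm_num

end CompleteMultipartite

theorem stmt2_general (m : ℕ) (n : Fin m → ℕ) (hn : ∀ i, 1 ≤ n i)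
    (D : Matrix ((i : Fin m) × Fin (n i)) ((i : Fin m) × Fin (n i)) ℝ)
    (hD : ∀ u v, D u v = if u = v then 0 else if u.1 = v.1 then 2 else 1) :
    D.det =
      (-2 : ℝ) ^ ((∑ i, n i) - m) *
        ((∑ i : Fin m, (n i : ℝ) * ∏ j ∈ Finset.univ.erase i, ((n j : ℝ) - 2))
          + ∏ i : Fin m, ((n i : ℝ) - 2)) := by
  have hm : m ≤ ∑ i, n i := by
    simpa using sum_le_sum fun i (_ : i ∈ univ) => hn i
  have hpow : (-2 : ℝ) ^ (∑ i, n i) * (-2⁻¹) ^ m = (-2) ^ ((∑ i, n i) - m) := by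
    rw [← Nat.sub_add_cancel hm, pow_add, mul_assoc, ← mul_pow, Nat.add_sub_cancel]
    norm_num
  rw [eq_smul_one_sub_partIndicator_mul n D hD, det_smul, det_one_sub_mul_comm,
    one_sub_map_add_one_mul_partIndicator, det_smul, det_diagonal_add_vecMulVec,
    Fintype.card_sigma]
  simp only [Fintype.card_fin, Pi.one_apply, one_mul]
  rw [← mul_assoc, hpow, add_comm]

theorem stmt2 (m : ℕ) (hm : 2 ≤ m) (n : Fin m → ℕ) (hn : ∀ i, 1 ≤ n i)
    (D : Matrix ((i : Fin m) × Fin (n i)) ((i : Fin m) × Fin (n i)) ℝ)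
    (hD : ∀ u v, D u v = if u = v then 0 else if u.1 = v.1 then 2 else 1) :
    D.det =
      (-2 : ℝ) ^ ((∑ i, n i) - m) *
        ((∑ i : Fin m, (n i : ℝ) * ∏ j ∈ Finset.univ.erase i, ((n j : ℝ) - 2))
          + ∏ i : Fin m, ((n i : ℝ) - 2)) :=
  stmt2_general m n hn D hD
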